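/- Let R be a symmetric positive definite real n×n matrix. Then the 2n×2n block matrix F = [[0, I], [-I, -R]] is Hurwitz, i.e., every eigenvalue of F has strictly negative real part. -/

import Mathlib

/-- A real square matrix is Hurwitz if all of its complex eigenvalues
have strictly negative real part. -/
def IsHurwitz {n : Type*} [Fintype n] [DecidableEq n] (A : Matrix n n ℝ) : Prop :=
  ∀ μ : ℂ, μ ∈ spectrum ℂ (A.map (Complex.ofReal)) → μ.re < 0

open Matrix Complex
open scoped ComplexOrder

lemma quad_form_complex {n : ℕ} (R : Matrix (Fin n) (Fin n) ℝ)
    (hRsym : R.IsSymm) (hR : R.PosDef) (z : Fin n → ℂ) (hz : z ≠ 0) :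
    ((star z ⬝ᵥ ((R.map Complex.ofReal) *ᵥ z)).im = 0) ∧
      0 < (star z ⬝ᵥ ((R.map Complex.ofReal) *ᵥ z)).re := by
  set u : Fin n → ℝ := fun i => (z i).re with hu
  set w : Fin n → ℝ := fun i => (z i).im with hw
  have hS : star z ⬝ᵥ ((R.map Complex.ofReal) *ᵥ z)
      = ∑ i, ∑ j, (starRingEnd ℂ) (z i) * ((R i j : ℂ) * z j) := by
    simp [dotProduct, mulVec, Matrix.map_apply, Finset.mul_sum]
  constructor
  · rw [hS]
    have : ∀ i j : Fin n, ((starRingEnd ℂ) (z i) * ((R i j : ℂ) * z j)).im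
        = R i j * (u i * w j) - R i j * (w i * u j) := by
      intro i j
      simp [Complex.mul_im, Complex.mul_re, hu, hw]
      ring
    simp only [Complex.im_sum, this, Finset.sum_sub_distrib]
    rw [sub_eq_zero]
    rw [Finset.sum_comm]
    congr 1; ext i; congr 1; ext j
    rw [hRsym.apply i j]
    ring
  · have hre : (star z ⬝ᵥ ((R.map Complex.ofReal) *ᵥ z)).re
        = star u ⬝ᵥ (R *ᵥ u) + star w ⬝ᵥ (R *ᵥ w) := by
      rw [hS]
      simp only [Complex.re_sum, dotProduct, mulVec, Pi.star_apply, star_trivial,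
        Finset.mul_sum, Finset.sum_add_distrib]
      rw [← Finset.sum_add_distrib]
      congr 1; ext i
      rw [← Finset.sum_add_distrib]
      congr 1; ext j
      simp [Complex.mul_re, Complex.mul_im, hu, hw]
    rw [hre]
    have huw : u ≠ 0 ∨ w ≠ 0 := by
      by_contra h
      push_neg at h
      apply hz
      funext i
      have h1 := congrFun h.1 i
      have h2 := congrFun h.2 i
      simp [hu, hw] at h1 h2
      exact Complex.ext h1 h2
    rcases huw with h | h
    · have := hR.dotProduct_mulVec_pos h
      have h2 := hR.posSemidef.dotProduct_mulVec_nonneg w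
      simp only [star_trivial] at *
      linarith
    · have := hR.dotProduct_mulVec_pos h
      have h2 := hR.posSemidef.dotProduct_mulVec_nonneg u
      simp only [star_trivial] at *
      linarith

theorem block_matrix_hurwitz {n : ℕ} (R : Matrix (Fin n) (Fin n) ℝ)
    (hRsym : R.IsSymm) (hR : R.PosDef) :
    IsHurwitz (Matrix.fromBlocks (0 : Matrix (Fin n) (Fin n) ℝ) (1 : Matrix (Fin n) (Fin n) ℝ)
      (-1 : Matrix (Fin n) (Fin n) ℝ) (-R)) := by
  intro μ hμ
  rw [← AlgEquiv.spectrum_eq (Matrix.toLinAlgEquiv' (R := ℂ) (n := Fin n ⊕ Fin n)),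
    ← Module.End.hasEigenvalue_iff_mem_spectrum] at hμ
  obtain ⟨v, hv⟩ := hμ.exists_hasEigenvector
  have hv0 : v ≠ 0 := hv.right
  have hveq : ((Matrix.fromBlocks (0 : Matrix (Fin n) (Fin n) ℝ) 1 (-1) (-R)).map
      Complex.ofReal) *ᵥ v = μ • v := by
    have := hv.apply_eq_smul
    rwa [Matrix.toLinAlgEquiv'_apply] at this
  set M : Matrix (Fin n) (Fin n) ℂ := R.map Complex.ofReal with hM
  have hblocks : ((Matrix.fromBlocks (0 : Matrix (Fin n) (Fin n) ℝ) 1 (-1) (-R)).map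
      Complex.ofReal) = Matrix.fromBlocks 0 1 (-1) (-M) := by
    ext (i | i) (j | j) <;>
      simp [Matrix.map_apply, Matrix.one_apply, apply_ite Complex.ofReal, hM]
  rw [hblocks] at hveq
  set x : Fin n → ℂ := v ∘ Sum.inl with hx
  set y : Fin n → ℂ := v ∘ Sum.inr with hyy
  have hvelim : v = Sum.elim x y := by funext i; cases i <;> rfl
  rw [hvelim, Matrix.fromBlocks_mulVec] at hveq
  have hy : y = μ • x := by
    funext i
    have := congrFun hveq (Sum.inl i)
    simpa using this
  have h2 : ∀ i, (-x i) - (M *ᵥ y) i = μ * y i := by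
    intro i
    have := congrFun hveq (Sum.inr i)
    simpa [Matrix.neg_mulVec, sub_eq_add_neg, add_comm] using this
  have hx0 : x ≠ 0 := by
    intro h
    apply hv0
    rw [hvelim, h, hy, h]
    simp
  -- the scalar quadratic equation
  set a : ℂ := star x ⬝ᵥ x with ha
  set b : ℂ := star x ⬝ᵥ (M *ᵥ x) with hb
  have vecEq : -x - μ • (M *ᵥ x) = μ • μ • x := by
    funext i
    have := h2 i
    rw [hy] at this
    simpa [Matrix.mulVec_smul, sub_eq_add_neg] using this
  have hd := congrArg (fun w => star x ⬝ᵥ w) vecEq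
  simp only [dotProduct_sub, dotProduct_neg, dotProduct_smul,
    smul_eq_mul] at hd
  have keyeq : μ ^ 2 * a + μ * b + a = 0 := by
    rw [← ha, ← hb] at hd
    linear_combination -hd
  -- a and b are positive reals
  have hapos : 0 < a := dotProduct_star_self_pos_iff.mpr hx0
  have haim : a.im = 0 := by
    rw [Complex.lt_def] at hapos; exact hapos.2.symm
  have hare : 0 < a.re := by
    rw [Complex.lt_def] at hapos; simpa using hapos.1
  obtain ⟨hbim, hbre⟩ := quad_form_complex R hRsym hR x hx0
  rw [← hb] at hbim hbre
  -- turn into real equations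
  have hacoe : a = (a.re : ℂ) := Complex.ext (by simp) (by simp [haim])
  have hbcoe : b = (b.re : ℂ) := Complex.ext (by simp) (by simp [hbim])
  rw [hacoe, hbcoe, pow_two, Complex.ext_iff] at keyeq
  obtain ⟨e1, e2⟩ := keyeq
  simp only [Complex.add_re, Complex.add_im, Complex.mul_re, Complex.mul_im,
    Complex.ofReal_re, Complex.ofReal_im, Complex.zero_re, Complex.zero_im] at e1 e2
  set α := μ.re
  set δ := μ.im
  set γ := a.re
  set β := b.re
  have E1 : (α * α - δ * δ) * γ + α * β + γ = 0 := by linear_combination e1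
  have E2 : δ * (2 * α * γ + β) = 0 := by linear_combination e2
  by_contra hcon
  push_neg at hcon
  have hδ : δ = 0 := by
    rcases mul_eq_zero.mp E2 with h | h
    · exact h
    · nlinarith
  rw [hδ] at E1
  nlinarith
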